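/- arXiv:1603.02717 — 2 statements merged into one kernel-verified Lean document; each statement's English description precedes it below -/
import Mathlib

section
/- Let H be a coupling function, θ̄ : ℤ × ℤ → ℝ any map, (i₀,j₀) ∈ ℤ × ℤ, and Λ = (ℤ × ℤ) \ {(i₀,j₀)}. Then the linearization L maps ℓ∞(Λ) boundedly into ℓ∞(Λ), but L is not bounded below on ℓ∞(Λ): for every δ > 0 there exists x ∈ ℓ∞(Λ) with ‖x‖_∞ = 1 and ‖Lx‖_∞ ≤ δ. In particular, L : ℓ∞(Λ) → ℓ∞(Λ) does not have a bounded inverse. -/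
open Real Filter Topology
open scoped ENNReal

/-- A coupling function: infinitely differentiable, `2π`-periodic, odd,
with strictly positive derivative on `(-π/2, π/2)`. -/
def IsCoupling (H : ℝ → ℝ) : Prop :=
  ContDiff ℝ (⊤ : ℕ∞) H ∧ (∀ x : ℝ, H (x + 2 * π) = H x) ∧ (∀ x : ℝ, H (-x) = - H x) ∧
    (∀ x ∈ Set.Ioo (-(π / 2)) (π / 2), 0 < deriv H x)

/-- The deleted lattice `Λ = ℤ² \ {(i₀,j₀)}`. -/
abbrev Lam (i₀ j₀ : ℤ) : Type := {p : ℤ × ℤ // p ≠ (i₀, j₀)}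

/-- Extension of `x : Λ → ℝ` to all of `ℤ²` by setting the value `0` at `(i₀,j₀)`. -/
noncomputable def lamExt (i₀ j₀ : ℤ) (x : Lam i₀ j₀ → ℝ) : ℤ × ℤ → ℝ :=
  fun p => if h : p = (i₀, j₀) then 0 else x ⟨p, h⟩

/-- The linearization `L` about the phase-lags `θbar`, acting on functions on `Λ`:
`(Lx)_{i,j} = Σ_{(i',j')} H'(θbar_{i',j'} - θbar_{i,j})(x̃_{i',j'} - x_{i,j})`,
the sum over the four nearest neighbours of `(i,j)`. -/
noncomputable def linL (H : ℝ → ℝ) (θbar : ℤ × ℤ → ℝ) (i₀ j₀ : ℤ)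
    (x : Lam i₀ j₀ → ℝ) (p : Lam i₀ j₀) : ℝ :=
  deriv H (θbar (p.1.1 + 1, p.1.2) - θbar p.1) * (lamExt i₀ j₀ x (p.1.1 + 1, p.1.2) - x p) +
  deriv H (θbar (p.1.1 - 1, p.1.2) - θbar p.1) * (lamExt i₀ j₀ x (p.1.1 - 1, p.1.2) - x p) +
  deriv H (θbar (p.1.1, p.1.2 + 1) - θbar p.1) * (lamExt i₀ j₀ x (p.1.1, p.1.2 + 1) - x p) +
  deriv H (θbar (p.1.1, p.1.2 - 1) - θbar p.1) * (lamExt i₀ j₀ x (p.1.1, p.1.2 - 1) - x p)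

/-- `min c ·` is 1-Lipschitz. -/
lemma min_lip (c a b : ℝ) : |min c a - min c b| ≤ |a - b| := by
  have key : ∀ u v : ℝ, min c u - min c v ≤ |u - v| := by
    intro u v
    have h1 : u ≤ v + |u - v| := by
      have := le_abs_self (u - v); linarith
    have h2 : min c u ≤ min c v + |u - v| := by
      calc min c u ≤ min (c + |u - v|) (v + |u - v|) :=
            min_le_min (le_add_of_nonneg_right (abs_nonneg _)) h1
        _ = min c v + |u - v| := by rw [min_add_add_right]
    linarith
  rw [abs_sub_le_iff]
  exact ⟨key a b, by simpa [abs_sub_comm] using key b a⟩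

/-- The derivative of a coupling function is globally bounded. -/
lemma coupling_deriv_bound (H : ℝ → ℝ) (hH : IsCoupling H) :
    ∃ M : ℝ, 0 ≤ M ∧ ∀ t : ℝ, |deriv H t| ≤ M := by
  have hcont : Continuous (deriv H) := hH.1.continuous_deriv (by simp)
  have hper : ∀ t : ℝ, deriv H (t + 2 * π) = deriv H t := by
    intro t
    have hfun : (fun y => H (y + 2 * π)) = H := funext hH.2.1
    calc deriv H (t + 2 * π) = deriv (fun y => H (y + 2 * π)) t :=
          (deriv_comp_add_const H (2 * π) t).symm
      _ = deriv H t := by rw [hfun]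
  obtain ⟨M, hMb⟩ := (isCompact_Icc (a := (0:ℝ)) (b := 2 * π)).exists_bound_of_continuousOn
    hcont.continuousOn
  have hM : ∀ t : ℝ, |deriv H t| ≤ M := by
    intro t
    have hπ : (0:ℝ) < 2 * π := by positivity
    have h0 : 0 ≤ t - ⌊t / (2 * π)⌋ * (2 * π) := Int.sub_floor_div_mul_nonneg t hπ
    have h1 : t - ⌊t / (2 * π)⌋ * (2 * π) < 2 * π := Int.sub_floor_div_mul_lt t hπ
    have hperiodic : Function.Periodic (deriv H) (2 * π) := hper
    have := hperiodic.sub_int_mul_eq (x := t) ⌊t / (2 * π)⌋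
    rw [← this]
    simpa using hMb _ ⟨h0, h1.le⟩
  exact ⟨M, (abs_nonneg _).trans (hM 0), hM⟩

set_option maxHeartbeats 1000000 in
set_option synthInstance.maxHeartbeats 400000 in
/-- `L` maps `ℓ∞(Λ)` boundedly into `ℓ∞(Λ)`, but is not bounded below there; in particular
it has no bounded inverse on `ℓ∞(Λ)`. -/
theorem stmt16 (H : ℝ → ℝ) (hH : IsCoupling H) (θbar : ℤ × ℤ → ℝ) (i₀ j₀ : ℤ) :
    ∃ T : lp (fun _ : Lam i₀ j₀ => ℝ) ∞ →L[ℝ] lp (fun _ : Lam i₀ j₀ => ℝ) ∞,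
      (∀ (x : lp (fun _ : Lam i₀ j₀ => ℝ) ∞) (p : Lam i₀ j₀),
        T x p = linL H θbar i₀ j₀ (⇑x) p) ∧
      (∀ δ : ℝ, 0 < δ → ∃ x : lp (fun _ : Lam i₀ j₀ => ℝ) ∞, ‖x‖ = 1 ∧ ‖T x‖ ≤ δ) ∧
      ¬ IsUnit T := by
  obtain ⟨M, hM0, hM⟩ := coupling_deriv_bound H hH
  -- pointwise bound for lamExt
  have hext : ∀ (x : lp (fun _ : Lam i₀ j₀ => ℝ) ∞) (q : ℤ × ℤ),
      |lamExt i₀ j₀ (⇑x) q| ≤ ‖x‖ := by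
    intro x q
    unfold lamExt
    split
    · rw [abs_zero]; exact norm_nonneg x
    · rw [← Real.norm_eq_abs]; exact lp.norm_apply_le_norm ENNReal.top_ne_zero x _
  have hxp : ∀ (x : lp (fun _ : Lam i₀ j₀ => ℝ) ∞) (p : Lam i₀ j₀), |x p| ≤ ‖x‖ := by
    intro x p
    rw [← Real.norm_eq_abs]; exact lp.norm_apply_le_norm ENNReal.top_ne_zero x p
  -- term/total estimate
  have hterm : ∀ (x : lp (fun _ : Lam i₀ j₀ => ℝ) ∞) (q : ℤ × ℤ) (p : Lam i₀ j₀),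
      |deriv H (θbar q - θbar p.1) * (lamExt i₀ j₀ (⇑x) q - x p)| ≤ M * (2 * ‖x‖) := by
    intro x q p
    rw [abs_mul]
    have h2 : |lamExt i₀ j₀ (⇑x) q - x p| ≤ 2 * ‖x‖ := by
      have := abs_sub (lamExt i₀ j₀ (⇑x) q) (x p)
      have := hext x q; have := hxp x p
      calc |lamExt i₀ j₀ (⇑x) q - x p| ≤ |lamExt i₀ j₀ (⇑x) q| + |x p| := abs_sub _ _
        _ ≤ 2 * ‖x‖ := by linarith [hext x q, hxp x p]
    exact mul_le_mul (hM _) h2 (abs_nonneg _) hM0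
  have hbound : ∀ (x : lp (fun _ : Lam i₀ j₀ => ℝ) ∞) (p : Lam i₀ j₀),
      |linL H θbar i₀ j₀ (⇑x) p| ≤ 8 * M * ‖x‖ := by
    intro x p
    unfold linL
    have h1 := hterm x (p.1.1 + 1, p.1.2) p
    have h2 := hterm x (p.1.1 - 1, p.1.2) p
    have h3 := hterm x (p.1.1, p.1.2 + 1) p
    have h4 := hterm x (p.1.1, p.1.2 - 1) p
    set a := deriv H (θbar (p.1.1 + 1, p.1.2) - θbar p.1) * (lamExt i₀ j₀ (⇑x) (p.1.1 + 1, p.1.2) - x p) with ha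
    set b := deriv H (θbar (p.1.1 - 1, p.1.2) - θbar p.1) * (lamExt i₀ j₀ (⇑x) (p.1.1 - 1, p.1.2) - x p) with hb
    set c := deriv H (θbar (p.1.1, p.1.2 + 1) - θbar p.1) * (lamExt i₀ j₀ (⇑x) (p.1.1, p.1.2 + 1) - x p) with hc
    set d := deriv H (θbar (p.1.1, p.1.2 - 1) - θbar p.1) * (lamExt i₀ j₀ (⇑x) (p.1.1, p.1.2 - 1) - x p) with hd
    calc |a + b + c + d| ≤ |a + b + c| + |d| := abs_add_le _ _
      _ ≤ (|a + b| + |c|) + |d| := add_le_add_left (abs_add_le _ _) _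
      _ ≤ ((|a| + |b|) + |c|) + |d| := by
          exact add_le_add_left (add_le_add_left (abs_add_le _ _) _) _
      _ ≤ 8 * M * ‖x‖ := by linarith
  have hmem : ∀ x : lp (fun _ : Lam i₀ j₀ => ℝ) ∞,
      Memℓp (fun p => linL H θbar i₀ j₀ (⇑x) p) (∞ : ℝ≥0∞) := by
    intro x
    apply memℓp_infty
    refine ⟨8 * M * ‖x‖, ?_⟩
    rintro r ⟨p, rfl⟩
    simpa [Real.norm_eq_abs] using hbound x p
  have hextadd : ∀ (x y : Lam i₀ j₀ → ℝ) (q : ℤ × ℤ),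
      lamExt i₀ j₀ (x + y) q = lamExt i₀ j₀ x q + lamExt i₀ j₀ y q := by
    intro x y q; unfold lamExt; split <;> simp
  have hextsmul : ∀ (c : ℝ) (x : Lam i₀ j₀ → ℝ) (q : ℤ × ℤ),
      lamExt i₀ j₀ (c • x) q = c * lamExt i₀ j₀ x q := by
    intro c x q; unfold lamExt; split <;> simp
  let L : lp (fun _ : Lam i₀ j₀ => ℝ) ∞ →ₗ[ℝ] lp (fun _ : Lam i₀ j₀ => ℝ) ∞ :=
    { toFun := fun x => ⟨fun p => linL H θbar i₀ j₀ (⇑x) p, hmem x⟩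
      map_add' := by
        intro x y
        apply lp.ext
        funext p
        show linL H θbar i₀ j₀ (⇑(x + y)) p = _
        rw [lp.coeFn_add]
        show linL H θbar i₀ j₀ (⇑x + ⇑y) p
          = linL H θbar i₀ j₀ (⇑x) p + linL H θbar i₀ j₀ (⇑y) p
        simp only [linL, hextadd, Pi.add_apply]
        ring
      map_smul' := by
        intro c x
        apply lp.ext
        funext p
        show linL H θbar i₀ j₀ (⇑(c • x)) p = _
        rw [lp.coeFn_smul]
        show linL H θbar i₀ j₀ (c • ⇑x) p = c * linL H θbar i₀ j₀ (⇑x) p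
        simp only [linL, hextsmul, Pi.smul_apply, smul_eq_mul]
        ring }
  have hLnorm : ∀ x, ‖L x‖ ≤ 8 * M * ‖x‖ := by
    intro x
    apply lp.norm_le_of_forall_le (by positivity)
    intro p
    exact (Real.norm_eq_abs _).trans_le (hbound x p)
  have hsmall : ∀ δ : ℝ, 0 < δ → ∃ x : lp (fun _ : Lam i₀ j₀ => ℝ) ∞,
      ‖x‖ = 1 ∧ ‖(L.mkContinuous (8 * M) hLnorm) x‖ ≤ δ := by
    intro δ hδ
    set N : ℕ := max 1 ⌈4 * M / δ⌉₊ with hN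
    have hN1 : 1 ≤ N := le_max_left _ _
    have hNpos : (0:ℝ) < N := by exact_mod_cast hN1
    set D : ℤ × ℤ → ℕ := fun q => (q.1 - i₀).natAbs + (q.2 - j₀).natAbs with hD
    set f : ℤ × ℤ → ℝ := fun q => min 1 ((D q : ℝ) / N) with hf
    have hf0 : f (i₀, j₀) = 0 := by simp [hf, hD]
    have hfnn : ∀ q, 0 ≤ f q := by intro q; positivity
    have hfle : ∀ q, f q ≤ 1 := fun q => min_le_left _ _
    have hmemx : Memℓp (fun p : Lam i₀ j₀ => f p.1) (∞ : ℝ≥0∞) := by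
      apply memℓp_infty
      refine ⟨1, ?_⟩
      rintro r ⟨p, rfl⟩
      simpa [Real.norm_eq_abs, abs_of_nonneg (hfnn p.1)] using hfle p.1
    set x : lp (fun _ : Lam i₀ j₀ => ℝ) ∞ := ⟨fun p => f p.1, hmemx⟩ with hx
    have hxapp : ∀ p : Lam i₀ j₀, x p = f p.1 := fun p => rfl
    have hextf : ∀ q, lamExt i₀ j₀ (⇑x) q = f q := by
      intro q
      unfold lamExt
      split
      · rename_i h; rw [h, hf0]
      · rfl
    have hnorm1 : ‖x‖ = 1 := by
      apply le_antisymm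
      · apply lp.norm_le_of_forall_le one_pos.le
        intro p
        simpa [hxapp, Real.norm_eq_abs, abs_of_nonneg (hfnn p.1)] using hfle p.1
      · have hp₀ : ((i₀ + (N:ℤ), j₀) : ℤ × ℤ) ≠ (i₀, j₀) := by
          intro h
          have := congrArg Prod.fst h
          simp at this
          omega
        have := lp.norm_apply_le_norm ENNReal.top_ne_zero x ⟨(i₀ + (N:ℤ), j₀), hp₀⟩
        have hval : x ⟨(i₀ + (N:ℤ), j₀), hp₀⟩ = 1 := by
          rw [hxapp]
          simp only [hf, hD]
          have : ((i₀ + (N:ℤ) - i₀).natAbs + ((j₀:ℤ) - j₀).natAbs : ℕ) = N := by omega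
          rw [this, div_self hNpos.ne']
          simp
        rw [hval] at this
        simpa using this
    refine ⟨x, hnorm1, ?_⟩
    -- neighbour差 estimate
    have hDnb : ∀ (p : Lam i₀ j₀) (q : ℤ × ℤ),
        (q = (p.1.1 + 1, p.1.2) ∨ q = (p.1.1 - 1, p.1.2) ∨
         q = (p.1.1, p.1.2 + 1) ∨ q = (p.1.1, p.1.2 - 1)) →
        |(D q : ℝ) - (D p.1 : ℝ)| ≤ 1 := by
      intro p q hq
      have h1 : D q ≤ D p.1 + 1 := by
        rcases hq with rfl | rfl | rfl | rfl <;> simp only [hD] <;> omega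
      have h2 : D p.1 ≤ D q + 1 := by
        rcases hq with rfl | rfl | rfl | rfl <;> simp only [hD] <;> omega
      have h1' : (D q : ℝ) ≤ (D p.1 : ℝ) + 1 := by exact_mod_cast h1
      have h2' : (D p.1 : ℝ) ≤ (D q : ℝ) + 1 := by exact_mod_cast h2
      rw [abs_le]
      constructor <;> linarith
    have hfnb : ∀ (p : Lam i₀ j₀) (q : ℤ × ℤ),
        (q = (p.1.1 + 1, p.1.2) ∨ q = (p.1.1 - 1, p.1.2) ∨
         q = (p.1.1, p.1.2 + 1) ∨ q = (p.1.1, p.1.2 - 1)) →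
        |f q - f p.1| ≤ 1 / N := by
      intro p q hq
      calc |f q - f p.1| ≤ |(D q : ℝ) / N - (D p.1 : ℝ) / N| := min_lip _ _ _
        _ = |(D q : ℝ) - (D p.1 : ℝ)| / N := by rw [div_sub_div_same, abs_div,
              abs_of_pos hNpos]
        _ ≤ 1 / N := by gcongr; exact hDnb p q hq
    -- pointwise estimate for L x
    have hTx : ∀ p : Lam i₀ j₀, |linL H θbar i₀ j₀ (⇑x) p| ≤ 4 * M * (1 / N) := by
      intro p
      have hterm' : ∀ q : ℤ × ℤ,
          (q = (p.1.1 + 1, p.1.2) ∨ q = (p.1.1 - 1, p.1.2) ∨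
           q = (p.1.1, p.1.2 + 1) ∨ q = (p.1.1, p.1.2 - 1)) →
          |deriv H (θbar q - θbar p.1) * (lamExt i₀ j₀ (⇑x) q - x p)| ≤ M * (1 / N) := by
        intro q hq
        rw [hextf, hxapp, abs_mul]
        exact mul_le_mul (hM _) (hfnb p q hq) (abs_nonneg _) hM0
      have h1 := hterm' (p.1.1 + 1, p.1.2) (Or.inl rfl)
      have h2 := hterm' (p.1.1 - 1, p.1.2) (Or.inr (Or.inl rfl))
      have h3 := hterm' (p.1.1, p.1.2 + 1) (Or.inr (Or.inr (Or.inl rfl)))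
      have h4 := hterm' (p.1.1, p.1.2 - 1) (Or.inr (Or.inr (Or.inr rfl)))
      unfold linL
      set a := deriv H (θbar (p.1.1 + 1, p.1.2) - θbar p.1) * (lamExt i₀ j₀ (⇑x) (p.1.1 + 1, p.1.2) - x p)
      set b := deriv H (θbar (p.1.1 - 1, p.1.2) - θbar p.1) * (lamExt i₀ j₀ (⇑x) (p.1.1 - 1, p.1.2) - x p)
      set c := deriv H (θbar (p.1.1, p.1.2 + 1) - θbar p.1) * (lamExt i₀ j₀ (⇑x) (p.1.1, p.1.2 + 1) - x p)
      set d := deriv H (θbar (p.1.1, p.1.2 - 1) - θbar p.1) * (lamExt i₀ j₀ (⇑x) (p.1.1, p.1.2 - 1) - x p)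
      calc |a + b + c + d| ≤ |a + b + c| + |d| := abs_add_le _ _
        _ ≤ (|a + b| + |c|) + |d| := add_le_add_left (abs_add_le _ _) _
        _ ≤ ((|a| + |b|) + |c|) + |d| := by
            exact add_le_add_left (add_le_add_left (abs_add_le _ _) _) _
        _ ≤ 4 * M * (1 / N) := by linarith
    have hfinal : 4 * M * (1 / N) ≤ δ := by
      have hceil : 4 * M / δ ≤ (⌈4 * M / δ⌉₊ : ℝ) := Nat.le_ceil _
      have hNle : ((⌈4 * M / δ⌉₊ : ℕ) : ℝ) ≤ (N : ℝ) := by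
        exact_mod_cast le_max_right 1 ⌈4 * M / δ⌉₊
      have h5 : 4 * M ≤ δ * N := by
        have := (div_le_iff₀ hδ).mp (hceil.trans hNle)
        linarith
      rw [mul_one_div, div_le_iff₀ hNpos]
      linarith
    refine le_trans (lp.norm_le_of_forall_le (by positivity) ?_) hfinal
    intro p
    show ‖linL H θbar i₀ j₀ (⇑x) p‖ ≤ _
    rw [Real.norm_eq_abs]
    exact hTx p
  refine ⟨L.mkContinuous (8 * M) hLnorm, fun x p => rfl, hsmall, ?_⟩
  intro hu
  obtain ⟨u, hu'⟩ := hu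
  set S : lp (fun _ : Lam i₀ j₀ => ℝ) ∞ →L[ℝ] lp (fun _ : Lam i₀ j₀ => ℝ) ∞ := ↑u⁻¹ with hS
  obtain ⟨x, hx1, hx2⟩ := hsmall (1 / (‖S‖ + 1)) (by positivity)
  have key : S ((L.mkContinuous (8 * M) hLnorm) x) = x := by
    rw [← hu']
    have h := u.inv_mul
    calc S ((↑u : lp (fun _ : Lam i₀ j₀ => ℝ) ∞ →L[ℝ] lp (fun _ : Lam i₀ j₀ => ℝ) ∞) x)
        = ((↑u⁻¹ * ↑u : lp (fun _ : Lam i₀ j₀ => ℝ) ∞ →L[ℝ] lp (fun _ : Lam i₀ j₀ => ℝ) ∞)) x :=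
          rfl
      _ = x := by rw [h, ContinuousLinearMap.one_apply]
  have hle : ‖S ((L.mkContinuous (8 * M) hLnorm) x)‖ ≤ ‖S‖ * ‖(L.mkContinuous (8 * M) hLnorm) x‖ :=
    S.le_opNorm _
  rw [key, hx1] at hle
  have hS0 : 0 ≤ ‖S‖ := norm_nonneg S
  have hlt : ‖S‖ * (1 / (‖S‖ + 1)) < 1 := by
    rw [mul_one_div, div_lt_one (by positivity)]
    linarith
  have : ‖S‖ * ‖(L.mkContinuous (8 * M) hLnorm) x‖ ≤ ‖S‖ * (1 / (‖S‖ + 1)) :=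
    mul_le_mul_of_nonneg_left hx2 hS0
  linarith
end

section
/- Let α, ω, Ω ∈ ℝ and let r, θ : ℝ → (ℤ × ℤ → ℝ) have differentiable components with r_{i,j}(t) > 0 for all (i,j) and t. Suppose that for all (i,j) ∈ ℤ × ℤ and all t ∈ ℝ: r′_{i,j}(t) = α Σ_{(i′,j′)} (r_{i′,j′}(t) cos(θ_{i′,j′}(t) − θ_{i,j}(t)) − r_{i,j}(t)) + r_{i,j}(t)(1 − r_{i,j}(t)²) and θ′_{i,j}(t) = α Σ_{(i′,j′)} (r_{i′,j′}(t)/r_{i,j}(t)) sin(θ_{i′,j′}(t) − θ_{i,j}(t)) + (ω − Ω), the sums being over the four nearest neighbours of (i,j). Then the complex-valued functions z_{i,j}(t) = r_{i,j}(t) · exp(i(Ωt + θ_{i,j}(t))) satisfy, for all (i,j) and t, the Lambda–Omega lattice system z′_{i,j}(t) = α Σ_{(i′,j′)} (z_{i′,j′}(t) − z_{i,j}(t)) + (1 + iω) z_{i,j}(t) − z_{i,j}(t)|z_{i,j}(t)|². -/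
/-! Writing `z = r e^{iφ}` with `φ = Ω t + θ`, the product and chain rules give
`z' = (r' + i r φ') e^{iφ}`. In the polar system each neighbour contributes
`(r_k cos Δ_k - r) + i r (r_k / r) sin Δ_k = r_k e^{iΔ_k} - r` to `r' + i r θ'`, where
`Δ_k = θ_k - θ`, and multiplied by `e^{iφ}` this is exactly `z_k - z`; the remaining terms give
`(1 + iω) z - z |z|²` because `|z| = r`. -/

open Real

/-- The complex oscillator `z_{i,j}(t) = r_{i,j}(t) e^{i(Ω t + θ_{i,j}(t))}` built from the
polar variables. -/
noncomputable def zVar (r θ : ℝ → ℤ → ℤ → ℝ) (Ω : ℝ) (t : ℝ) (i j : ℤ) : ℂ :=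
  (r t i j : ℂ) * Complex.exp (Complex.I * ((Ω : ℂ) * (t : ℂ) + (θ t i j : ℂ)))

open Complex in
theorem hasDerivAt_ofReal_mul_cexp_I_mul {ρ φ : ℝ → ℝ} {ρ' φ' t : ℝ}
    (hρ : HasDerivAt ρ ρ' t) (hφ : HasDerivAt φ φ' t) :
    HasDerivAt (fun s => (ρ s : ℂ) * exp (I * φ s))
      ((ρ' + I * ρ t * φ') * exp (I * φ t)) t := by
  have hexp := (hφ.ofReal_comp.const_mul I).cexp
  exact (hρ.ofReal_comp.fun_mul hexp).congr_deriv (by ring)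

open Complex in
theorem polar_coupling_eq {ρ : ℝ} (hρ : ρ ≠ 0) (ρ' Δ : ℝ) :
    ((ρ' * Real.cos Δ - ρ : ℝ) : ℂ) + I * ρ * ((ρ' / ρ * Real.sin Δ : ℝ) : ℂ) =
      ρ' * exp (Δ * I) - ρ := by
  have hρ' : (ρ : ℂ) ≠ 0 := ofReal_ne_zero.mpr hρ
  rw [exp_mul_I, ← ofReal_cos, ← ofReal_sin]
  push_cast
  field_simp
  ring

section zVar

variable (r θ : ℝ → ℤ → ℤ → ℝ) (Ω t : ℝ)

theorem zVar_eq_ofReal_mul_cexp (i j : ℤ) :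
    zVar r θ Ω t i j = r t i j * Complex.exp (Complex.I * ((Ω * t + θ t i j : ℝ) : ℂ)) := by
  simp [zVar]

theorem zVar_eq_mul_cexp_sub (i j a b : ℤ) :
    zVar r θ Ω t a b = r t a b * Complex.exp (((θ t a b - θ t i j : ℝ) : ℂ) * Complex.I) *
      Complex.exp (Complex.I * ((Ω * t + θ t i j : ℝ) : ℂ)) := by
  rw [zVar_eq_ofReal_mul_cexp, mul_assoc, ← Complex.exp_add]
  push_cast
  congr 2
  ring

theorem norm_zVar {i j : ℤ} (h : 0 ≤ r t i j) : ‖zVar r θ Ω t i j‖ = r t i j := by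
  rw [zVar_eq_ofReal_mul_cexp, norm_mul, Complex.norm_real, Complex.norm_exp_I_mul_ofReal,
    mul_one, Real.norm_of_nonneg h]

theorem hasDerivAt_zVar {i j : ℤ} {r' θ' : ℝ} (hr : HasDerivAt (fun s => r s i j) r' t)
    (hθ : HasDerivAt (fun s => θ s i j) θ' t) :
    HasDerivAt (fun s => zVar r θ Ω s i j)
      ((r' + Complex.I * r t i j * (Ω + θ')) *
        Complex.exp (Complex.I * ((Ω * t + θ t i j : ℝ) : ℂ))) t := by
  simp only [zVar_eq_ofReal_mul_cexp]
  have hφ := ((hasDerivAt_id' t).const_mul Ω).fun_add hθ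
  exact (hasDerivAt_ofReal_mul_cexp_I_mul hr hφ).congr_deriv (by push_cast; ring)

end zVar

/-- If the polar variables `(r, θ)` satisfy the polar form of the Lambda–Omega lattice
system, then `z_{i,j} = r_{i,j} e^{i(Ω t + θ_{i,j})}` satisfies the Lambda–Omega lattice
dynamical system with discrete diffusive coupling. -/
theorem stmt17 (α ω Ω : ℝ) (r θ : ℝ → ℤ → ℤ → ℝ)
    (hrpos : ∀ (t : ℝ) (i j : ℤ), 0 < r t i j)
    (hr : ∀ (i j : ℤ) (t : ℝ), HasDerivAt (fun s => r s i j)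
      (α * ((r t (i + 1) j * Real.cos (θ t (i + 1) j - θ t i j) - r t i j) +
            (r t (i - 1) j * Real.cos (θ t (i - 1) j - θ t i j) - r t i j) +
            (r t i (j + 1) * Real.cos (θ t i (j + 1) - θ t i j) - r t i j) +
            (r t i (j - 1) * Real.cos (θ t i (j - 1) - θ t i j) - r t i j)) +
        r t i j * (1 - r t i j ^ 2)) t)
    (hθ : ∀ (i j : ℤ) (t : ℝ), HasDerivAt (fun s => θ s i j)
      (α * ((r t (i + 1) j / r t i j) * Real.sin (θ t (i + 1) j - θ t i j) +
            (r t (i - 1) j / r t i j) * Real.sin (θ t (i - 1) j - θ t i j) +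
            (r t i (j + 1) / r t i j) * Real.sin (θ t i (j + 1) - θ t i j) +
            (r t i (j - 1) / r t i j) * Real.sin (θ t i (j - 1) - θ t i j)) +
        (ω - Ω)) t) :
    ∀ (i j : ℤ) (t : ℝ), HasDerivAt (fun s => zVar r θ Ω s i j)
      ((α : ℂ) * ((zVar r θ Ω t (i + 1) j - zVar r θ Ω t i j) +
          (zVar r θ Ω t (i - 1) j - zVar r θ Ω t i j) +
          (zVar r θ Ω t i (j + 1) - zVar r θ Ω t i j) +
          (zVar r θ Ω t i (j - 1) - zVar r θ Ω t i j)) +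
        (1 + Complex.I * (ω : ℂ)) * zVar r θ Ω t i j -
        zVar r θ Ω t i j * ((‖zVar r θ Ω t i j‖ : ℝ) : ℂ) ^ 2) t := by
  intro i j t
  have hρ := hrpos t i j
  refine (hasDerivAt_zVar r θ Ω t (hr i j t) (hθ i j t)).congr_deriv ?_
  have c₁ := polar_coupling_eq hρ.ne' (r t (i + 1) j) (θ t (i + 1) j - θ t i j)
  have c₂ := polar_coupling_eq hρ.ne' (r t (i - 1) j) (θ t (i - 1) j - θ t i j)
  have c₃ := polar_coupling_eq hρ.ne' (r t i (j + 1)) (θ t i (j + 1) - θ t i j)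
  have c₄ := polar_coupling_eq hρ.ne' (r t i (j - 1)) (θ t i (j - 1) - θ t i j)
  rw [norm_zVar r θ Ω t hρ.le, zVar_eq_mul_cexp_sub r θ Ω t i j (i + 1) j,
    zVar_eq_mul_cexp_sub r θ Ω t i j (i - 1) j, zVar_eq_mul_cexp_sub r θ Ω t i j i (j + 1),
    zVar_eq_mul_cexp_sub r θ Ω t i j i (j - 1), zVar_eq_ofReal_mul_cexp]
  push_cast at c₁ c₂ c₃ c₄ ⊢
  linear_combination
    (α * Complex.exp (Complex.I * (Ω * t + θ t i j))) * (c₁ + c₂ + c₃ + c₄)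
end
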